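/- arXiv:2404.04576 — 2 statements merged into one kernel-verified Lean document; each statement's English description precedes it below -/
import Mathlib

section
/- Let E be a real p×n matrix with full column rank, and define à := E A (EᵀE)⁻¹ Eᵀ for A ∈ ℝ^{n×n}. If P̃ ∈ ℝ^{p×p} is symmetric and satisfies ÃᵀP̃ + P̃Ã + ρ(I - E(EᵀE)⁻¹Eᵀ) ≺ 0 for some ρ ∈ ℝ, then P := EᵀP̃E satisfies AᵀP + PA ≺ 0. -/
open Matrix

/-!
Congruence by `E` maps the LMI matrix onto the Lyapunov matrix of `A`: since `Ã E = E A`, the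
terms `ÃᵀP̃ + P̃Ã` become `AᵀP + PA`, while `Eᵀ M E = 0` kills the `ρ`-term whatever its sign.
Full column rank makes `E` injective, so congruence by `E` preserves definiteness.
-/

namespace Matrix

variable {m n k K R : Type*}

theorem mulVec_injective_of_rank_eq_card [Field K] [Fintype m] [Fintype n]
    {E : Matrix m n K} (hE : E.rank = Fintype.card n) : Function.Injective E.mulVec :=
  mulVec_injective_iff.mpr <| linearIndependent_iff_card_eq_finrank_span.mpr <| by
    rw [← hE, rank_eq_finrank_span_cols]; rfl

section Compression

variable [CommRing R] [Fintype m] [Fintype n] [DecidableEq n] {E : Matrix m n R}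

theorem mul_inv_transpose_mul_self_mul_transpose_mul_cancel (hE : IsUnit (Eᵀ * E).det)
    (B : Matrix k n R) : B * (Eᵀ * E)⁻¹ * Eᵀ * E = B := by
  rw [Matrix.mul_assoc _ Eᵀ, Matrix.mul_assoc, nonsing_inv_mul _ hE, Matrix.mul_one]

theorem transpose_mul_one_sub_projection_mul (hE : IsUnit (Eᵀ * E).det) [DecidableEq m] :
    Eᵀ * (1 - E * (Eᵀ * E)⁻¹ * Eᵀ) * E = 0 := by
  rw [Matrix.mul_sub, Matrix.sub_mul, Matrix.mul_one, Matrix.mul_assoc Eᵀ,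
    mul_inv_transpose_mul_self_mul_transpose_mul_cancel hE, sub_self]

theorem transpose_mul_lyapunov_lift_mul [DecidableEq m] (hE : IsUnit (Eᵀ * E).det)
    (A : Matrix n n R) (P : Matrix m m R) (ρ : R) :
    Eᵀ * ((E * A * (Eᵀ * E)⁻¹ * Eᵀ)ᵀ * P + P * (E * A * (Eᵀ * E)⁻¹ * Eᵀ)
      + ρ • (1 - E * (Eᵀ * E)⁻¹ * Eᵀ)) * E = Aᵀ * (Eᵀ * P * E) + (Eᵀ * P * E) * A := by
  have hAE := mul_inv_transpose_mul_self_mul_transpose_mul_cancel hE (E * A)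
  have hEAt : Eᵀ * (E * A * (Eᵀ * E)⁻¹ * Eᵀ)ᵀ = Aᵀ * Eᵀ := by
    rw [← transpose_mul, hAE, transpose_mul]
  rw [Matrix.mul_add, Matrix.add_mul, Matrix.mul_smul, Matrix.smul_mul,
    transpose_mul_one_sub_projection_mul hE, smul_zero, add_zero, Matrix.mul_add, Matrix.add_mul,
    ← Matrix.mul_assoc, hEAt]
  simp only [Matrix.mul_assoc] at hAE ⊢
  rw [hAE]

end Compression

end Matrix

theorem stmt_8_general (p n : ℕ) (E : Matrix (Fin p) (Fin n) ℝ)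
    (hE : E.rank = n) (A : Matrix (Fin n) (Fin n) ℝ)
    (Pt : Matrix (Fin p) (Fin p) ℝ)
    (h : ∃ ρ : ℝ,
      (-((E * A * (Eᵀ * E)⁻¹ * Eᵀ)ᵀ * Pt + Pt * (E * A * (Eᵀ * E)⁻¹ * Eᵀ)
        + ρ • (1 - E * (Eᵀ * E)⁻¹ * Eᵀ))).PosDef) :
    (-(Aᵀ * (Eᵀ * Pt * E) + (Eᵀ * Pt * E) * A)).PosDef := by
  obtain ⟨ρ, hQ⟩ := h
  have hinj : Function.Injective E.mulVec :=
    mulVec_injective_of_rank_eq_card (by rw [hE, Fintype.card_fin])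
  have hG : IsUnit (Eᵀ * E).det := by
    simpa using (PosDef.conjTranspose_mul_self E hinj).isUnit.map detMonoidHom
  have hcongr := hQ.conjTranspose_mul_mul_same hinj
  rwa [conjTranspose_eq_transpose_of_trivial, Matrix.mul_neg, Matrix.neg_mul,
    transpose_mul_lyapunov_lift_mul hG] at hcongr

theorem stmt_8 (p n : ℕ) (E : Matrix (Fin p) (Fin n) ℝ)
    (hE : E.rank = n) (A : Matrix (Fin n) (Fin n) ℝ)
    (Pt : Matrix (Fin p) (Fin p) ℝ) (hPt : Ptᵀ = Pt)
    (h : ∃ ρ : ℝ,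
      (-((E * A * (Eᵀ * E)⁻¹ * Eᵀ)ᵀ * Pt + Pt * (E * A * (Eᵀ * E)⁻¹ * Eᵀ)
        + ρ • (1 - E * (Eᵀ * E)⁻¹ * Eᵀ))).PosDef) :
    (-(Aᵀ * (Eᵀ * Pt * E) + (Eᵀ * Pt * E) * A)).PosDef :=
  stmt_8_general p n E hE A Pt h
end

section
/- Let E be a real p×n matrix with full column rank, A ∈ ℝ^{n×n}, and à := EA(EᵀE)⁻¹Eᵀ. If P ∈ ℝ^{n×n} is symmetric positive definite with AᵀP + PA ≺ 0 and P admits a factorization P = EᵀP̃E for some symmetric P̃ ∈ ℝ^{p×p}, then there exists ρ ∈ ℝ such that ÃᵀP̃ + P̃Ã + ρ(I - E(EᵀE)⁻¹Eᵀ) ≺ 0. -/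
/-!
Write `Π = E (EᵀE)⁻¹ Eᵀ` for the orthogonal projector onto the column space of `E`.
Since `Ã E = E A` and `P = Eᵀ P̃ E`, we get `Eᵀ (ÃᵀP̃ + P̃Ã) E = AᵀP + PA`, so `ÃᵀP̃ + P̃Ã`
is negative on every nonzero vector `E z` of the kernel of the positive semidefinite matrix
`I - Π`. Finsler's lemma then yields `ρ` with `ÃᵀP̃ + P̃Ã + ρ (I - Π) ≺ 0`.
-/

open Matrix

namespace Matrix

variable {m n : Type*} [Fintype n]

lemma dotProduct_mulVec_smul_self (A : Matrix n n ℝ) (c : ℝ) (x : n → ℝ) :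
    (c • x) ⬝ᵥ A *ᵥ (c • x) = c ^ 2 * (x ⬝ᵥ A *ᵥ x) := by
  simp only [mulVec_smul, dotProduct_smul, smul_dotProduct, smul_eq_mul]
  ring

/-- Finsler's lemma. On the compact set of unit vectors where `Q` is not positive, `M` is
positive, so the ratio `-(xᵀ Q x) / xᵀ M x` is bounded above there. -/
theorem exists_posDef_add_smul_of_posSemidef {Q M : Matrix n n ℝ} (hQ : Q.IsHermitian)
    (hM : M.PosSemidef) (h : ∀ x ≠ 0, x ⬝ᵥ M *ᵥ x = 0 → 0 < x ⬝ᵥ Q *ᵥ x) :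
    ∃ ρ : ℝ, (Q + ρ • M).PosDef := by
  set S := Metric.sphere (0 : n → ℝ) 1 ∩ {x | x ⬝ᵥ Q *ᵥ x ≤ 0}
  have hS : IsCompact S :=
    (isCompact_sphere 0 1).inter_right (isClosed_le (by fun_prop) continuous_const)
  have hMS : ∀ x ∈ S, 0 < x ⬝ᵥ M *ᵥ x := fun x hx => by
    have hx0 : x ≠ 0 := ne_zero_of_mem_unit_sphere (x := ⟨x, hx.1⟩)
    have := hM.dotProduct_mulVec_nonneg x
    simp only [star_trivial] at this
    exact this.lt_of_ne' fun h0 => (h x hx0 h0).not_ge hx.2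
  obtain ⟨ρ, hρ⟩ := hS.bddAbove_image (f := fun x => -(x ⬝ᵥ Q *ᵥ x) / (x ⬝ᵥ M *ᵥ x))
    ((by fun_prop : Continuous fun x => -(x ⬝ᵥ Q *ᵥ x)).continuousOn.div
      (by fun_prop : Continuous fun x => x ⬝ᵥ M *ᵥ x).continuousOn fun x hx => (hMS x hx).ne')
  set c := max ρ 0 + 1
  have hunit : ∀ y ∈ Metric.sphere (0 : n → ℝ) 1, 0 < y ⬝ᵥ (Q + c • M) *ᵥ y := by
    intro y hy
    rw [add_mulVec, dotProduct_add, smul_mulVec, dotProduct_smul, smul_eq_mul]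
    by_cases hQy : y ⬝ᵥ Q *ᵥ y ≤ 0
    · have hyS : y ∈ S := ⟨hy, hQy⟩
      have hMy := hMS y hyS
      have := (div_le_iff₀ hMy).1 (hρ ⟨y, hyS, rfl⟩)
      nlinarith [le_max_left ρ 0]
    · have hMy : 0 ≤ y ⬝ᵥ M *ᵥ y := by simpa using hM.dotProduct_mulVec_nonneg y
      have hc : 0 ≤ c := by positivity
      nlinarith
  refine ⟨c, PosDef.of_dotProduct_mulVec_pos (hQ.add (hM.1.smul (IsSelfAdjoint.all c)))
    fun x hx => ?_⟩
  have hx' : 0 < ‖x‖ := norm_pos_iff.2 hx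
  have := hunit (‖x‖⁻¹ • x) (by simp [norm_smul, hx'.ne'])
  rw [dotProduct_mulVec_smul_self] at this
  simpa using pos_of_mul_pos_right this (by positivity)

lemma mulVec_injective_of_rank_eq_card_s9 {K : Type*} [Field K] {A : Matrix m n K}
    (hA : A.rank = Fintype.card n) : Function.Injective A.mulVec := by
  have hrk := LinearMap.finrank_range_add_finrank_ker A.mulVecLin
  rw [Module.finrank_fintype_fun_eq_card, ← rank, hA, Nat.add_eq_left,
    Submodule.finrank_eq_zero] at hrk
  exact LinearMap.ker_eq_bot.1 hrk

lemma isUnit_det_transpose_mul_self_of_injective [Fintype m] [DecidableEq n] {E : Matrix m n ℝ}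
    (hE : Function.Injective E.mulVec) : IsUnit (Eᵀ * E).det :=
  (isUnit_iff_isUnit_det _).1 (by simpa using (PosDef.conjTranspose_mul_self E hE).isUnit)

lemma IsSymm.posSemidef_of_isIdempotentElem {M : Matrix n n ℝ} (hs : M.IsSymm)
    (hi : IsIdempotentElem M) : M.PosSemidef := by
  simpa [hs.eq, hi.eq] using posSemidef_conjTranspose_mul_self M

lemma IsSymm.mulVec_eq_zero_of_isIdempotentElem {M : Matrix n n ℝ} (hs : M.IsSymm)
    (hi : IsIdempotentElem M) {x : n → ℝ} (hx : x ⬝ᵥ M *ᵥ x = 0) : M *ᵥ x = 0 := by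
  have hsq : (M *ᵥ x) ⬝ᵥ (M *ᵥ x) = x ⬝ᵥ M *ᵥ x := by
    conv_rhs => rw [← hi.eq, ← mulVec_mulVec, dotProduct_mulVec, ← mulVec_transpose, hs.eq]
  rw [← hsq] at hx
  exact dotProduct_self_eq_zero.1 hx

lemma dotProduct_mulVec_mulVec_self [Fintype m] (S : Matrix m m ℝ) (E : Matrix m n ℝ)
    (z : n → ℝ) :
    (E *ᵥ z) ⬝ᵥ S *ᵥ (E *ᵥ z) = z ⬝ᵥ (Eᵀ * S * E) *ᵥ z := by
  simp [← mulVec_mulVec, dotProduct_mulVec, vecMul_transpose]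

lemma transpose_mul_lyapunov_mul_eq {R : Type*} [CommRing R] [Fintype m] [DecidableEq n]
    {E : Matrix m n R} (hE : IsUnit (Eᵀ * E).det) (A : Matrix n n R) (Pt : Matrix m m R) :
    Eᵀ * ((E * A * (Eᵀ * E)⁻¹ * Eᵀ)ᵀ * Pt + Pt * (E * A * (Eᵀ * E)⁻¹ * Eᵀ)) * E
      = Aᵀ * (Eᵀ * Pt * E) + (Eᵀ * Pt * E) * A := by
  have hAE : E * A * (Eᵀ * E)⁻¹ * Eᵀ * E = E * A := by
    rw [Matrix.mul_assoc, Matrix.mul_assoc (E * A), nonsing_inv_mul _ hE, Matrix.mul_one]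
  rw [Matrix.mul_add, Matrix.add_mul]
  congr 1
  · rw [← Matrix.mul_assoc Eᵀ, ← transpose_mul, hAE, transpose_mul]
    simp only [Matrix.mul_assoc]
  · simp only [Matrix.mul_assoc] at hAE ⊢
    rw [hAE]

section colSpaceProj

variable [Fintype m] [DecidableEq n] (E : Matrix m n ℝ)

noncomputable def colSpaceProj : Matrix m m ℝ := E * (Eᵀ * E)⁻¹ * Eᵀ

lemma isSymm_colSpaceProj : (colSpaceProj E).IsSymm := by
  simp [colSpaceProj, IsSymm, transpose_nonsing_inv, Matrix.mul_assoc]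

variable {E}

lemma colSpaceProj_mul_self (hE : IsUnit (Eᵀ * E).det) : colSpaceProj E * E = E := by
  rw [colSpaceProj, Matrix.mul_assoc, Matrix.mul_assoc, nonsing_inv_mul _ hE, Matrix.mul_one]

lemma isIdempotentElem_colSpaceProj (hE : IsUnit (Eᵀ * E).det) :
    IsIdempotentElem (colSpaceProj E) := by
  change colSpaceProj E * (E * (Eᵀ * E)⁻¹ * Eᵀ) = _
  rw [← Matrix.mul_assoc, ← Matrix.mul_assoc, colSpaceProj_mul_self hE, colSpaceProj]

lemma posSemidef_one_sub_colSpaceProj [DecidableEq m] (hE : IsUnit (Eᵀ * E).det) :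
    (1 - colSpaceProj E).PosSemidef :=
  (isSymm_one.sub (isSymm_colSpaceProj E)).posSemidef_of_isIdempotentElem
    (isIdempotentElem_colSpaceProj hE).one_sub

lemma mem_range_mulVec_of_dotProduct_one_sub_colSpaceProj_mulVec_eq_zero [DecidableEq m]
    (hE : IsUnit (Eᵀ * E).det) {x : m → ℝ} (hx : x ⬝ᵥ (1 - colSpaceProj E) *ᵥ x = 0) :
    x ∈ Set.range E.mulVec := by
  have h := (isSymm_one.sub (isSymm_colSpaceProj E)).mulVec_eq_zero_of_isIdempotentElem
    (isIdempotentElem_colSpaceProj hE).one_sub hx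
  rw [sub_mulVec, one_mulVec, sub_eq_zero, colSpaceProj, ← mulVec_mulVec, ← mulVec_mulVec] at h
  exact ⟨_, h.symm⟩

end colSpaceProj

end Matrix

theorem stmt_9_general (p n : ℕ) (E : Matrix (Fin p) (Fin n) ℝ)
    (hE : E.rank = n) (A : Matrix (Fin n) (Fin n) ℝ)
    (P : Matrix (Fin n) (Fin n) ℝ)
    (hLyap : (-(Aᵀ * P + P * A)).PosDef)
    (Pt : Matrix (Fin p) (Fin p) ℝ) (hPt : Ptᵀ = Pt)
    (hfact : P = Eᵀ * Pt * E) :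
    ∃ ρ : ℝ,
      (-((E * A * (Eᵀ * E)⁻¹ * Eᵀ)ᵀ * Pt + Pt * (E * A * (Eᵀ * E)⁻¹ * Eᵀ)
        + ρ • (1 - E * (Eᵀ * E)⁻¹ * Eᵀ))).PosDef := by
  have hG : IsUnit (Eᵀ * E).det :=
    isUnit_det_transpose_mul_self_of_injective
      (mulVec_injective_of_rank_eq_card_s9 (by simpa using hE))
  have hQ : (-((E * A * (Eᵀ * E)⁻¹ * Eᵀ)ᵀ * Pt
      + Pt * (E * A * (Eᵀ * E)⁻¹ * Eᵀ))).IsHermitian :=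
    IsHermitian.neg <| by simp [IsHermitian, transpose_mul, hPt, add_comm]
  obtain ⟨σ, hσ⟩ :=
    exists_posDef_add_smul_of_posSemidef hQ (posSemidef_one_sub_colSpaceProj hG) fun x hx h0 => by
      obtain ⟨z, rfl⟩ :=
        mem_range_mulVec_of_dotProduct_one_sub_colSpaceProj_mulVec_eq_zero hG h0
      have hz : z ≠ 0 := by rintro rfl; simp at hx
      rw [dotProduct_mulVec_mulVec_self, Matrix.mul_neg, Matrix.neg_mul,
        transpose_mul_lyapunov_mul_eq hG, ← hfact]
      simpa using hLyap.dotProduct_mulVec_pos hz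
  refine ⟨-σ, ?_⟩
  rwa [neg_smul, neg_add, neg_neg]

theorem stmt_9 (p n : ℕ) (E : Matrix (Fin p) (Fin n) ℝ)
    (hE : E.rank = n) (A : Matrix (Fin n) (Fin n) ℝ)
    (P : Matrix (Fin n) (Fin n) ℝ) (hP : P.PosDef)
    (hLyap : (-(Aᵀ * P + P * A)).PosDef)
    (Pt : Matrix (Fin p) (Fin p) ℝ) (hPt : Ptᵀ = Pt)
    (hfact : P = Eᵀ * Pt * E) :
    ∃ ρ : ℝ,
      (-((E * A * (Eᵀ * E)⁻¹ * Eᵀ)ᵀ * Pt + Pt * (E * A * (Eᵀ * E)⁻¹ * Eᵀ)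
        + ρ • (1 - E * (Eᵀ * E)⁻¹ * Eᵀ))).PosDef :=
  stmt_9_general p n E hE A P hLyap Pt hPt hfact
end
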